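/- Let 𝓛 = A_{PQ}(y) ẏ_1^P ẏ_2^Q with A_{PQ} smooth and skew-symmetric in P, Q (n = 2). Then 𝓛 satisfies the Zermelo conditions ∑_K ẏ_k^K ∂𝓛/∂ẏ_j^K = δ_k^j 𝓛, and moreover the fundamental-Lepage coefficients (1/(2!)²)·∂²𝓛/∂ẏ_{j_1}^{K_1}∂ẏ_{j_2}^{K_2}·ε_{j_1 j_2} = (1/2)A_{K_1 K_2}, while the Hilbert–Carathéodory coefficients (1/2)·(1/𝓛)·(∂𝓛/∂ẏ_{j_1}^{K_1})(∂𝓛/∂ẏ_{j_2}^{K_2})ε_{j_1 j_2} differ from (1/2)A_{K_1K_2} in general (e.g. for M ≥ 4 there exist A and ẏ where they disagree). -/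

import Mathlib

/-- The standard basis direction `∂/∂ẏ_j^K` in the space `ℝ^{2×M}` of velocity variables. -/
noncomputable def basisDir (n M : ℕ) (j : Fin n) (K : Fin M) : Fin n → Fin M → ℝ :=
  Pi.single j (Pi.single K 1)

/-- The Levi-Civita permutation symbol on `n` indices. -/
noncomputable def eps {n : ℕ} (f : Fin n → Fin n) : ℝ :=
  if h : Function.Bijective f then ((Equiv.Perm.sign (Equiv.ofBijective f h) : ℤ) : ℝ) else 0

/-- The bilinear skew Lagrange function `𝓛 = A_{PQ}(y) ẏ₁^P ẏ₂^Q` (dimension `n = 2`). -/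
noncomputable def bilinL (M : ℕ) (A : (Fin M → ℝ) → Fin M → Fin M → ℝ)
    (y : Fin M → ℝ) (v : Fin 2 → Fin M → ℝ) : ℝ :=
  ∑ P : Fin M, ∑ Q : Fin M, A y P Q * v 0 P * v 1 Q

-- auxiliary infrastructure

noncomputable def ev (M : ℕ) (j : Fin 2) (K : Fin M) : (Fin 2 → Fin M → ℝ) →L[ℝ] ℝ :=
  (ContinuousLinearMap.proj (R := ℝ) (φ := fun _ : Fin M => ℝ) K).comp
    (ContinuousLinearMap.proj (R := ℝ) (φ := fun _ : Fin 2 => Fin M → ℝ) j)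

lemma ev_apply (M : ℕ) (j : Fin 2) (K : Fin M) (v : Fin 2 → Fin M → ℝ) : ev M j K v = v j K := rfl

noncomputable def Dclm (M : ℕ) (c : Fin M → Fin M → ℝ) :
    (Fin 2 → Fin M → ℝ) →L[ℝ] (Fin 2 → Fin M → ℝ) →L[ℝ] ℝ :=
  ∑ P : Fin M, ∑ Q : Fin M,
    c P Q • ((ev M 0 P).smulRight (ev M 1 Q) + (ev M 1 Q).smulRight (ev M 0 P))

lemma Dclm_apply (M : ℕ) (c : Fin M → Fin M → ℝ) (v w : Fin 2 → Fin M → ℝ) :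
    Dclm M c v w = ∑ P : Fin M, ∑ Q : Fin M, c P Q * (v 0 P * w 1 Q + v 1 Q * w 0 P) := by
  simp [Dclm, ContinuousLinearMap.sum_apply, ev_apply, smul_eq_mul, mul_add]

lemma Dclm_eval (M : ℕ) (c : Fin M → Fin M → ℝ) (v : Fin 2 → Fin M → ℝ) :
    Dclm M c v = ∑ P : Fin M, ∑ Q : Fin M, c P Q • ((v 0 P) • ev M 1 Q + (v 1 Q) • ev M 0 P) := by
  ext w
  simp [Dclm, ContinuousLinearMap.sum_apply, ev_apply, smul_eq_mul, mul_add]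

lemma hasFDeriv_bilinL (M : ℕ) (A : (Fin M → ℝ) → Fin M → Fin M → ℝ) (y : Fin M → ℝ)
    (v : Fin 2 → Fin M → ℝ) :
    HasFDerivAt (bilinL M A y) (Dclm M (A y) v) v := by
  rw [Dclm_eval]
  have h : ∀ P Q : Fin M,
      HasFDerivAt (fun v : Fin 2 → Fin M → ℝ => A y P Q * v 0 P * v 1 Q)
        (A y P Q • ((v 0 P) • ev M 1 Q + (v 1 Q) • ev M 0 P)) v := by
    intro P Q
    have h1 : HasFDerivAt (fun v : Fin 2 → Fin M → ℝ => A y P Q * v 0 P)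
        (A y P Q • ev M 0 P) v := ((ev M 0 P).hasFDerivAt (x := v)).const_mul (A y P Q)
    have h2 : HasFDerivAt (fun v : Fin 2 → Fin M → ℝ => v 1 Q) (ev M 1 Q) v :=
      (ev M 1 Q).hasFDerivAt
    have := h1.fun_mul h2
    refine this.congr_fderiv ?_
    ext w
    simp [ev_apply]
    ring
  exact HasFDerivAt.fun_sum fun P _ => HasFDerivAt.fun_sum fun Q _ => h P Q

lemma fderiv_bilinL (M : ℕ) (A : (Fin M → ℝ) → Fin M → Fin M → ℝ) (y : Fin M → ℝ)
    (v w : Fin 2 → Fin M → ℝ) :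
    fderiv ℝ (bilinL M A y) v w = ∑ P : Fin M, ∑ Q : Fin M,
      A y P Q * (v 0 P * w 1 Q + v 1 Q * w 0 P) := by
  rw [(hasFDeriv_bilinL M A y v).fderiv, Dclm_apply]

lemma iteratedFDeriv_bilinL (M : ℕ) (A : (Fin M → ℝ) → Fin M → Fin M → ℝ) (y : Fin M → ℝ)
    (v : Fin 2 → Fin M → ℝ) (m : Fin 2 → Fin 2 → Fin M → ℝ) :
    iteratedFDeriv ℝ 2 (bilinL M A y) v m = Dclm M (A y) (m 0) (m 1) := by
  rw [iteratedFDeriv_two_apply]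
  have h1 : fderiv ℝ (bilinL M A y) = fun v => Dclm M (A y) v :=
    funext fun v => (hasFDeriv_bilinL M A y v).fderiv
  rw [h1, (Dclm M (A y)).fderiv]

lemma basisDir_apply (M : ℕ) (j : Fin 2) (K : Fin M) (j' : Fin 2) (K' : Fin M) :
    basisDir 2 M j K j' K' = if j' = j then (if K' = K then 1 else 0) else 0 := by
  simp [basisDir, Pi.single_apply, apply_ite (fun f : Fin M → ℝ => f K')]

lemma skew_contract (M : ℕ) (c : Fin M → Fin M → ℝ) (hc : ∀ P Q, c P Q = -c Q P)
    (u : Fin M → ℝ) : ∑ P : Fin M, ∑ Q : Fin M, c P Q * u P * u Q = 0 := by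
  have h : (∑ P : Fin M, ∑ Q : Fin M, c P Q * u P * u Q)
      = -∑ P : Fin M, ∑ Q : Fin M, c P Q * u P * u Q := by
    calc (∑ P : Fin M, ∑ Q : Fin M, c P Q * u P * u Q)
        = ∑ Q : Fin M, ∑ P : Fin M, c P Q * u P * u Q := Finset.sum_comm
      _ = ∑ P : Fin M, ∑ Q : Fin M, (-(c P Q * u P * u Q)) := by
          refine Finset.sum_congr rfl fun P _ => Finset.sum_congr rfl fun Q _ => ?_
          rw [hc]; ring
      _ = -∑ P : Fin M, ∑ Q : Fin M, c P Q * u P * u Q := by simp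
  linarith

lemma fderiv_basis (M : ℕ) (A : (Fin M → ℝ) → Fin M → Fin M → ℝ) (y : Fin M → ℝ)
    (v : Fin 2 → Fin M → ℝ) (j : Fin 2) (K : Fin M) :
    fderiv ℝ (bilinL M A y) v (basisDir 2 M j K) =
      if j = 0 then ∑ Q : Fin M, A y K Q * v 1 Q else ∑ P : Fin M, A y P K * v 0 P := by
  rw [fderiv_bilinL]
  fin_cases j
  · rw [Finset.sum_comm]
    simp [basisDir_apply, mul_ite, mul_zero, mul_one, Finset.sum_ite_eq', mul_comm]
  · simp [basisDir_apply, mul_ite, mul_zero, mul_one, Finset.sum_ite_eq', mul_comm]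

lemma Dbasis (M : ℕ) (c : Fin M → Fin M → ℝ) (j₁ j₂ : Fin 2) (K₁ K₂ : Fin M) :
    Dclm M c (basisDir 2 M j₁ K₁) (basisDir 2 M j₂ K₂) =
      (if j₁ = 0 ∧ j₂ = 1 then c K₁ K₂ else 0) +
      (if j₁ = 1 ∧ j₂ = 0 then c K₂ K₁ else 0) := by
  rw [Dclm_apply]
  fin_cases j₁ <;> fin_cases j₂ <;>
    simp [basisDir_apply, mul_ite, ite_mul, mul_zero, zero_mul, mul_one, one_mul,
      Finset.sum_ite_eq', mul_add]

lemma eps_01 : eps ![(0 : Fin 2), 1] = 1 := by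
  have hb : Function.Bijective ![(0 : Fin 2), 1] := by decide
  rw [eps, dif_pos hb]
  have h : Equiv.ofBijective _ hb = Equiv.refl (Fin 2) :=
    Equiv.ext fun x => by fin_cases x <;> rfl
  rw [h]
  simp

lemma eps_10 : eps ![(1 : Fin 2), 0] = -1 := by
  have hb : Function.Bijective ![(1 : Fin 2), 0] := by decide
  rw [eps, dif_pos hb]
  have h : Equiv.ofBijective _ hb = Equiv.swap 0 1 :=
    Equiv.ext fun x => by fin_cases x <;> simp [Equiv.swap_apply_left, Equiv.swap_apply_right]
  rw [h, Equiv.Perm.sign_swap (by decide)]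
  simp

lemma eps_00 : eps ![(0 : Fin 2), 0] = 0 := by
  rw [eps, dif_neg]; decide

lemma eps_11 : eps ![(1 : Fin 2), 1] = 0 := by
  rw [eps, dif_neg]; decide

/-- Remark 4.6: for `𝓛 = A_{PQ}(y) ẏ₁^P ẏ₂^Q` with `A` skew-symmetric,
(i) `𝓛` satisfies the Zermelo conditions; (ii) the fundamental-Lepage coefficients
`(1/(2!)²) ∂²𝓛/∂ẏ_{j₁}^{K₁}∂ẏ_{j₂}^{K₂} ε_{j₁j₂}` equal `(1/2) A_{K₁K₂}`; and (iii) for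
some `M ≥ 4` the Hilbert–Carathéodory coefficients differ from `(1/2) A_{K₁K₂}`. -/
theorem bilinear_skew_lagrangian_fundamental_vs_hilbert_caratheodory :
    (∀ (M : ℕ) (A : (Fin M → ℝ) → Fin M → Fin M → ℝ),
      (∀ y P Q, A y P Q = -A y Q P) →
      ∀ (y : Fin M → ℝ) (v : Fin 2 → Fin M → ℝ) (j k : Fin 2),
        ∑ K : Fin M, v k K * fderiv ℝ (bilinL M A y) v (basisDir 2 M j K) =
          (if k = j then bilinL M A y v else 0)) ∧
    (∀ (M : ℕ) (A : (Fin M → ℝ) → Fin M → Fin M → ℝ),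
      (∀ y P Q, A y P Q = -A y Q P) →
      ∀ (y : Fin M → ℝ) (v : Fin 2 → Fin M → ℝ) (K₁ K₂ : Fin M),
        ((2 : ℝ) * 2)⁻¹ * ∑ j₁ : Fin 2, ∑ j₂ : Fin 2,
            iteratedFDeriv ℝ 2 (bilinL M A y) v
              ![basisDir 2 M j₁ K₁, basisDir 2 M j₂ K₂] * eps ![j₁, j₂] =
          (1 / 2 : ℝ) * A y K₁ K₂) ∧
    (∃ M : ℕ, 4 ≤ M ∧ ∃ A : (Fin M → ℝ) → Fin M → Fin M → ℝ,
      (∀ y P Q, A y P Q = -A y Q P) ∧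
      (∀ P Q, ContDiff ℝ (⊤ : ℕ∞) fun y => A y P Q) ∧
      ∃ (y : Fin M → ℝ) (v : Fin 2 → Fin M → ℝ) (K₁ K₂ : Fin M),
        bilinL M A y v ≠ 0 ∧
        (1 / 2 : ℝ) * (bilinL M A y v)⁻¹ * ∑ j₁ : Fin 2, ∑ j₂ : Fin 2,
            fderiv ℝ (bilinL M A y) v (basisDir 2 M j₁ K₁) *
              fderiv ℝ (bilinL M A y) v (basisDir 2 M j₂ K₂) * eps ![j₁, j₂] ≠
          (1 / 2 : ℝ) * A y K₁ K₂) := by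
  refine ⟨?_, ?_, ?_⟩
  · -- Zermelo
    intro M A hA y v j k
    simp only [fderiv_basis]
    fin_cases j <;> fin_cases k <;>
      simp only [Fin.mk_zero, Fin.mk_one, Fin.isValue, reduceIte]
    · -- k = 0, j = 0
      rw [bilinL]
      rw [Finset.sum_congr rfl fun K _ => Finset.mul_sum ..]
      exact Finset.sum_congr rfl fun P _ => Finset.sum_congr rfl fun Q _ => by ring
    · -- k = 1, j = 0 : zero
      have := skew_contract M (A y) (hA y) (v 1)
      calc (∑ K : Fin M, v 1 K * ∑ Q : Fin M, A y K Q * v 1 Q)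
          = ∑ K : Fin M, ∑ Q : Fin M, A y K Q * v 1 K * v 1 Q := by
            refine Finset.sum_congr rfl fun K _ => ?_
            rw [Finset.mul_sum]
            exact Finset.sum_congr rfl fun Q _ => by ring
        _ = 0 := this
    · -- k = 0, j = 1 : zero
      have := skew_contract M (A y) (hA y) (v 0)
      calc (∑ K : Fin M, v 0 K * ∑ P : Fin M, A y P K * v 0 P)
          = ∑ Q : Fin M, ∑ P : Fin M, A y P Q * v 0 P * v 0 Q := by
            refine Finset.sum_congr rfl fun K _ => ?_
            rw [Finset.mul_sum]
            exact Finset.sum_congr rfl fun P _ => by ring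
        _ = 0 := by rw [Finset.sum_comm]; exact this
    · -- k = 1, j = 1
      simp only [show ((1 : Fin 2) = 0) = False from by simp, if_false]
      rw [bilinL, Finset.sum_comm]
      rw [Finset.sum_congr rfl fun K _ => Finset.mul_sum ..]
      exact Finset.sum_congr rfl fun Q _ => Finset.sum_congr rfl fun P _ => by ring
  · -- fundamental Lepage coefficients
    intro M A hA y v K₁ K₂
    have hit : ∀ j₁ j₂ : Fin 2,
        iteratedFDeriv ℝ 2 (bilinL M A y) v ![basisDir 2 M j₁ K₁, basisDir 2 M j₂ K₂] =
          Dclm M (A y) (basisDir 2 M j₁ K₁) (basisDir 2 M j₂ K₂) := by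
      intro j₁ j₂
      rw [iteratedFDeriv_bilinL]
      norm_num
    rw [Fin.sum_univ_two]
    rw [Fin.sum_univ_two, Fin.sum_univ_two]
    rw [hit 0 0, hit 0 1, hit 1 0, hit 1 1]
    rw [Dbasis, Dbasis, Dbasis, Dbasis]
    rw [eps_00, eps_01, eps_10, eps_11]
    have h := hA y K₂ K₁
    norm_num
    linarith
  · -- counterexample
    refine ⟨4, le_refl 4, fun _ => ![![0,1,0,0],![-1,0,0,0],![0,0,0,1],![0,0,-1,0]], ?_, ?_, ?_⟩
    · intro y P Q
      fin_cases P <;> fin_cases Q <;> norm_num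
    · intro P Q; exact contDiff_const
    · refine ⟨0, ![![1,0,1,0],![0,1,0,1]], 0, 1, ?_, ?_⟩
      · show (bilinL 4 _ 0 _) ≠ 0
        rw [bilinL]
        norm_num [Fin.sum_univ_four, Matrix.vecHead, Matrix.vecTail, Matrix.cons_val_two, Matrix.cons_val_three]
      · have hL : bilinL 4 (fun _ => ![![0,1,0,0],![-1,0,0,0],![0,0,0,1],![0,0,-1,0]]) 0
            ![![1,0,1,0],![0,1,0,1]] = 2 := by
          rw [bilinL]; norm_num [Fin.sum_univ_four, Matrix.vecHead, Matrix.vecTail, Matrix.cons_val_two, Matrix.cons_val_three]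
        simp only [fderiv_basis, Fin.sum_univ_two, hL]
        rw [eps_00, eps_01, eps_10, eps_11]
        norm_num [Fin.sum_univ_four, Matrix.vecHead, Matrix.vecTail, Matrix.cons_val_two, Matrix.cons_val_three]
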